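/- Interpolation-based nonlinear estimate: for any L-periodic mean-zero w ∈ H⁶, ∫ w w_x ∂_x⁸ w dx ≤ c |w|_{L²}^{17/12} |∂_x⁶ w|_{L²}^{19/12} for a universal constant c. -/

import Mathlib

/-!
Two periodic integrations by parts turn `∫ w w' w⁽⁸⁾` into `∫ (3 w' w'' + w w''') w⁽⁶⁾`.
Since `w` and `w'` have mean zero, Agmon's inequality `‖f‖∞² ≤ 2 ‖f‖ ‖f'‖` bounds them
pointwise, and Cauchy–Schwarz handles the remaining product. One more integration by parts gives
`‖f'‖² ≤ ‖f‖ ‖f''‖`, i.e. `k ↦ ‖w⁽ᵏ⁾‖` is log-convex, so `‖w⁽ʲ⁾‖⁶ ≤ ‖w‖⁶⁻ʲ ‖w⁽⁶⁾‖ʲ`; with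
these interpolation bounds both terms become multiples of `‖w‖^(17/12) ‖w⁽⁶⁾‖^(19/12)`.
-/

open Real intervalIntegral Function Set

def IsLogConvexUpTo (a : ℕ → ℝ) (n : ℕ) : Prop :=
  ∀ k, k + 2 ≤ n → a (k + 1) ^ 2 ≤ a k * a (k + 2)

namespace IsLogConvexUpTo

variable {a : ℕ → ℝ} {n : ℕ}

theorem succ_mul_le_mul_succ (ha : ∀ k, 0 ≤ a k) (h : IsLogConvexUpTo a n) {i j : ℕ}
    (hij : i ≤ j) (hj : j + 1 ≤ n) : a (i + 1) * a j ≤ a i * a (j + 1) := by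
  induction j, hij using Nat.le_induction with
  | base => rw [mul_comm]
  | succ j hij ih =>
    have key : a (j + 1) * (a (i + 1) * a (j + 1)) ≤ a (j + 1) * (a i * a (j + 2)) := by
      nlinarith [ih (by omega), h j (by omega), ha (i + 1), ha (j + 2), ha i, ha (j + 1)]
    rcases (ha (j + 1)).eq_or_lt with hzero | hpos
    · rw [← hzero, mul_zero]
      exact mul_nonneg (ha i) (ha (j + 2))
    · exact le_of_mul_le_mul_left key hpos

theorem mul_pow_le (ha : ∀ k, 0 ≤ a k) (h : IsLogConvexUpTo a n) {j m : ℕ} (hjm : j ≤ m)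
    (hm : m + 1 ≤ n) : a j * a m ^ j ≤ a 0 * a (m + 1) ^ j := by
  induction j with
  | zero => simp
  | succ j ih =>
    calc a (j + 1) * a m ^ (j + 1) = (a (j + 1) * a m) * a m ^ j := by ring
      _ ≤ (a j * a (m + 1)) * a m ^ j :=
        mul_le_mul_of_nonneg_right (h.succ_mul_le_mul_succ ha (by omega) hm) (pow_nonneg (ha m) j)
      _ = a (m + 1) * (a j * a m ^ j) := by ring
      _ ≤ a (m + 1) * (a 0 * a (m + 1) ^ j) :=
        mul_le_mul_of_nonneg_left (ih (by omega)) (ha _)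
      _ = a 0 * a (m + 1) ^ (j + 1) := by ring

theorem pow_le (ha : ∀ k, 0 ≤ a k) (h : IsLogConvexUpTo a n) {j m : ℕ} (hjm : j ≤ m)
    (hm : m ≤ n) : a j ^ m ≤ a 0 ^ (m - j) * a m ^ j := by
  induction m, hjm using Nat.le_induction with
  | base => simp
  | succ m hjm ih =>
    calc a j ^ (m + 1) = a j ^ m * a j := pow_succ _ _
      _ ≤ a 0 ^ (m - j) * a m ^ j * a j := mul_le_mul_of_nonneg_right (ih (by omega)) (ha j)
      _ = a 0 ^ (m - j) * (a j * a m ^ j) := by ring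
      _ ≤ a 0 ^ (m - j) * (a 0 * a (m + 1) ^ j) :=
        mul_le_mul_of_nonneg_left (h.mul_pow_le ha hjm (by omega)) (pow_nonneg (ha 0) _)
      _ = a 0 ^ (m + 1 - j) * a (m + 1) ^ j := by
        rw [Nat.sub_add_comm hjm, pow_succ]; ring

/-- With `a j ≤ a 0 ^ (1 - j / 6) * a 6 ^ (j / 6)`, the condition `i + j = 3` is exactly what
makes the exponents of `a 0` and `a 6` add up to `17 / 12` and `19 / 12`. -/
theorem sqrt_mul_mul_mul_le (ha : ∀ k, 0 ≤ a k) (h : IsLogConvexUpTo a n) (hn : 6 ≤ n)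
    {i j : ℕ} (hij : i + j = 3) :
    √(a i * a (i + 1)) * a j * a 6 ≤ a 0 ^ (17 / 12 : ℝ) * a 6 ^ (19 / 12 : ℝ) := by
  have hpow (k : ℕ) (hk : k ≤ 6) : a k ^ 6 ≤ a 0 ^ (6 - k) * a 6 ^ k := h.pow_le ha hk hn
  have ha0 := ha 0
  have ha6 := ha 6
  refine le_of_pow_le_pow_left₀ (n := 12) (by norm_num) (by positivity) ?_
  calc (√(a i * a (i + 1)) * a j * a 6) ^ 12
      = a i ^ 6 * a (i + 1) ^ 6 * (a j ^ 6) ^ 2 * a 6 ^ 12 := by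
        rw [mul_pow, mul_pow, show (12 : ℕ) = 2 * 6 from rfl, pow_mul √_,
          sq_sqrt (mul_nonneg (ha _) (ha _))]
        ring
    _ ≤ (a 0 ^ (6 - i) * a 6 ^ i) * (a 0 ^ (6 - (i + 1)) * a 6 ^ (i + 1))
          * (a 0 ^ (6 - j) * a 6 ^ j) ^ 2 * a 6 ^ 12 := by
        gcongr
        · exact hpow i (by omega)
        · exact hpow (i + 1) (by omega)
        · exact hpow j (by omega)
    _ = a 0 ^ ((6 - i) + (6 - (i + 1)) + 2 * (6 - j)) * a 6 ^ (i + (i + 1) + 2 * j + 12) := by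
        ring
    _ = (a 0 ^ (17 / 12 : ℝ) * a 6 ^ (19 / 12 : ℝ)) ^ 12 := by
        rw [show (6 - i) + (6 - (i + 1)) + 2 * (6 - j) = 17 by omega,
          show i + (i + 1) + 2 * j + 12 = 19 by omega, mul_pow, ← rpow_mul_natCast (ha 0),
          ← rpow_mul_natCast (ha 6)]
        norm_num

end IsLogConvexUpTo

noncomputable def intervalL2Norm (L : ℝ) (f : ℝ → ℝ) : ℝ :=
  √(∫ x in (0 : ℝ)..L, f x ^ 2)

section IntervalL2Norm

variable {L : ℝ} {f f' g h : ℝ → ℝ}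

@[simp]
theorem intervalL2Norm_abs : intervalL2Norm L (fun x => |f x|) = intervalL2Norm L f := by
  simp only [intervalL2Norm, sq_abs]

@[simp]
theorem intervalL2Norm_neg : intervalL2Norm L (fun x => -f x) = intervalL2Norm L f := by
  simp only [intervalL2Norm, neg_sq]

theorem sq_intervalL2Norm (hL : 0 ≤ L) :
    intervalL2Norm L f ^ 2 = ∫ x in (0 : ℝ)..L, f x ^ 2 :=
  sq_sqrt (integral_nonneg hL fun x _ => sq_nonneg (f x))

theorem intervalL2Norm_rpow (hL : 0 ≤ L) (r : ℝ) :
    intervalL2Norm L f ^ r = (∫ x in (0 : ℝ)..L, f x ^ 2) ^ (r / 2) := by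
  rw [intervalL2Norm, sqrt_eq_rpow, ← rpow_mul (integral_nonneg hL fun x _ => sq_nonneg (f x))]
  ring_nf

theorem integral_mul_le_intervalL2Norm_mul (hL : 0 ≤ L) (hf : Continuous f)
    (hg : Continuous g) :
    ∫ x in (0 : ℝ)..L, f x * g x ≤ intervalL2Norm L f * intervalL2Norm L g := by
  set A := ∫ x in (0 : ℝ)..L, f x ^ 2
  set B := ∫ x in (0 : ℝ)..L, f x * g x
  set C := ∫ x in (0 : ℝ)..L, g x ^ 2
  have hquad (t : ℝ) : 0 ≤ C * (t * t) + 2 * B * t + A := by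
    have hexpand : ∫ x in (0 : ℝ)..L, (t * g x + f x) ^ 2 = C * (t * t) + 2 * B * t + A := by
      have hpt (x : ℝ) :
          (t * g x + f x) ^ 2 = t * t * g x ^ 2 + 2 * t * (f x * g x) + f x ^ 2 := by
        ring
      simp_rw [hpt]
      rw [integral_add (by apply Continuous.intervalIntegrable; fun_prop)
          (by apply Continuous.intervalIntegrable; fun_prop),
        integral_add (by apply Continuous.intervalIntegrable; fun_prop)
          (by apply Continuous.intervalIntegrable; fun_prop),
        integral_const_mul, integral_const_mul]
      ring
    exact hexpand ▸ integral_nonneg hL fun x _ => sq_nonneg _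
  have hdisc : B ^ 2 ≤ A * C := by
    have := discrim_le_zero hquad
    rw [discrim] at this
    nlinarith
  calc B ≤ √(B ^ 2) := by rw [sqrt_sq_eq_abs]; exact le_abs_self B
    _ ≤ √(A * C) := sqrt_le_sqrt hdisc
    _ = intervalL2Norm L f * intervalL2Norm L g :=
      sqrt_mul (integral_nonneg hL fun x _ => sq_nonneg (f x)) C

theorem integral_abs_mul_abs_le (hL : 0 ≤ L) (hf : Continuous f) (hg : Continuous g) :
    ∫ x in (0 : ℝ)..L, |f x| * |g x| ≤ intervalL2Norm L f * intervalL2Norm L g := by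
  simpa using integral_mul_le_intervalL2Norm_mul hL hf.abs hg.abs

theorem integral_mul_mul_le (hL : 0 ≤ L) (hf : Continuous f) (hg : Continuous g)
    (hh : Continuous h) {M : ℝ} (hM : ∀ x ∈ Icc 0 L, |f x| ≤ M) :
    ∫ x in (0 : ℝ)..L, f x * g x * h x ≤ M * intervalL2Norm L g * intervalL2Norm L h := by
  have hpt : ∀ x ∈ Icc 0 L, f x * g x * h x ≤ M * (|g x| * |h x|) := fun x hx =>
    calc f x * g x * h x ≤ |f x * g x * h x| := le_abs_self _
      _ = |f x| * (|g x| * |h x|) := by rw [abs_mul, abs_mul, mul_assoc]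
      _ ≤ M * (|g x| * |h x|) := by gcongr; exact hM x hx
  have hM0 : 0 ≤ M := (abs_nonneg _).trans (hM 0 ⟨le_rfl, hL⟩)
  calc ∫ x in (0 : ℝ)..L, f x * g x * h x ≤ ∫ x in (0 : ℝ)..L, M * (|g x| * |h x|) :=
        integral_mono_on hL (by apply Continuous.intervalIntegrable; fun_prop)
          (by apply Continuous.intervalIntegrable; fun_prop) hpt
    _ = M * ∫ x in (0 : ℝ)..L, |g x| * |h x| := integral_const_mul M _
    _ ≤ M * intervalL2Norm L g * intervalL2Norm L h := by
        rw [mul_assoc]; gcongr; exact integral_abs_mul_abs_le hL hg hh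

theorem exists_mem_Ioo_eq_zero_of_integral_eq_zero (hL : 0 < L) (hf : Continuous f)
    (hmean : ∫ x in (0 : ℝ)..L, f x = 0) : ∃ c ∈ Ioo 0 L, f c = 0 := by
  have hprim : Continuous fun t => ∫ x in (0 : ℝ)..t, f x :=
    continuous_primitive (fun _ _ => hf.intervalIntegrable _ _) 0
  refine exists_hasDerivAt_eq_zero hL hprim.continuousOn (by simp [hmean]) fun t _ => ?_
  exact integral_hasDerivAt_right (hf.intervalIntegrable _ _) (hf.stronglyMeasurableAtFilter _ _)
    hf.continuousAt

/-- Agmon's inequality. -/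
theorem sq_le_two_mul_intervalL2Norm_mul (hL : 0 < L) (hf : ∀ x, HasDerivAt f (f' x) x)
    (hf' : Continuous f') (hmean : ∫ x in (0 : ℝ)..L, f x = 0) {x : ℝ} (hx : x ∈ Icc 0 L) :
    f x ^ 2 ≤ 2 * intervalL2Norm L f * intervalL2Norm L f' := by
  have hfc : Continuous f := continuous_iff_continuousAt.2 fun x => (hf x).continuousAt
  obtain ⟨c, hc, hfc0⟩ := exists_mem_Ioo_eq_zero_of_integral_eq_zero hL hfc hmean
  have hsq (t : ℝ) : HasDerivAt (fun s => f s ^ 2) (2 * (f t * f' t)) t :=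
    ((hf t).fun_pow 2).congr_deriv (by push_cast; ring)
  have hsub : uIoc c x ⊆ uIoc 0 L := by
    rw [uIoc_of_le hL.le]
    exact Ioc_subset_Ioc (le_min hc.1.le hx.1) (max_le hc.2.le hx.2)
  calc f x ^ 2 = ∫ t in c..x, 2 * (f t * f' t) := by
        rw [integral_eq_sub_of_hasDerivAt (fun t _ => hsq t)
          (by apply Continuous.intervalIntegrable; fun_prop), hfc0]
        ring
    _ ≤ |∫ t in c..x, (|2 * (f t * f' t)|)| := by
        simpa only [norm_eq_abs] using (le_abs_self _).trans
          (norm_integral_le_abs_integral_norm (f := fun t => 2 * (f t * f' t)))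
    _ ≤ |∫ t in (0 : ℝ)..L, (|2 * (f t * f' t)|)| :=
        abs_integral_mono_interval hsub (Filter.Eventually.of_forall fun t => abs_nonneg _)
          (by apply Continuous.intervalIntegrable; fun_prop)
    _ = 2 * ∫ t in (0 : ℝ)..L, |f t| * |f' t| := by
        rw [abs_of_nonneg (integral_nonneg hL.le fun t _ => abs_nonneg _), ← integral_const_mul]
        simp only [abs_mul, abs_two]
    _ ≤ 2 * intervalL2Norm L f * intervalL2Norm L f' := by
        rw [mul_assoc]; gcongr; exact integral_abs_mul_abs_le hL.le hfc hf'

theorem integral_mul_mul_le_of_integral_eq_zero (hL : 0 < L) (hf : ∀ x, HasDerivAt f (f' x) x)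
    (hf' : Continuous f') (hmean : ∫ x in (0 : ℝ)..L, f x = 0) (hg : Continuous g)
    (hh : Continuous h) :
    ∫ x in (0 : ℝ)..L, f x * g x * h x ≤
      √2 * √(intervalL2Norm L f * intervalL2Norm L f')
        * intervalL2Norm L g * intervalL2Norm L h :=
  integral_mul_mul_le hL.le (continuous_iff_continuousAt.2 fun x => (hf x).continuousAt) hg hh
    fun x hx => by
      rw [← sqrt_mul zero_le_two, ← mul_assoc]
      exact abs_le_sqrt (sq_le_two_mul_intervalL2Norm_mul hL hf hf' hmean hx)

end IntervalL2Norm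

section Periodic

variable {L : ℝ} {f f' f'' u u' v v' : ℝ → ℝ}

theorem Function.Periodic.deriv (h : Periodic f L) : Periodic (_root_.deriv f) L := fun x => by
  rw [← deriv_comp_add_const, funext h]

theorem Function.Periodic.iterate_deriv (h : Periodic f L) (k : ℕ) :
    Periodic (_root_.deriv^[k] f) L := by
  induction k with
  | zero => exact h
  | succ k ih => rw [iterate_succ_apply']; exact ih.deriv

theorem integral_eq_zero_of_hasDerivAt_of_periodic (hf : ∀ x, HasDerivAt f (f' x) x)
    (hf' : Continuous f') (hp : Periodic f L) : ∫ x in (0 : ℝ)..L, f' x = 0 := by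
  rw [integral_eq_sub_of_hasDerivAt (fun x _ => hf x) (hf'.intervalIntegrable _ _)]
  simpa using sub_eq_zero.2 (hp 0)

theorem integral_mul_deriv_eq_neg_of_periodic (hu : ∀ x, HasDerivAt u (u' x) x)
    (hv : ∀ x, HasDerivAt v (v' x) x) (hu' : Continuous u') (hv' : Continuous v')
    (hpu : Periodic u L) (hpv : Periodic v L) :
    ∫ x in (0 : ℝ)..L, u x * v' x = -∫ x in (0 : ℝ)..L, u' x * v x := by
  rw [integral_mul_deriv_eq_deriv_mul (fun x _ => hu x) (fun x _ => hv x)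
    (hu'.intervalIntegrable _ _) (hv'.intervalIntegrable _ _)]
  have hboundary : u L * v L = u 0 * v 0 := by simpa using congr($(hpu 0) * $(hpv 0))
  rw [hboundary, sub_self, zero_sub]

theorem sq_intervalL2Norm_le_mul_of_periodic (hL : 0 ≤ L) (hf : ∀ x, HasDerivAt f (f' x) x)
    (hf' : ∀ x, HasDerivAt f' (f'' x) x) (hf'' : Continuous f'') (hp : Periodic f L) :
    intervalL2Norm L f' ^ 2 ≤ intervalL2Norm L f * intervalL2Norm L f'' := by
  have hfc : Continuous f := continuous_iff_continuousAt.2 fun x => (hf x).continuousAt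
  have hf'c : Continuous f' := continuous_iff_continuousAt.2 fun x => (hf' x).continuousAt
  have hp' : Periodic f' L := by
    simpa only [funext fun x => (hf x).deriv] using hp.deriv
  calc intervalL2Norm L f' ^ 2 = -∫ x in (0 : ℝ)..L, f x * f'' x := by
        rw [sq_intervalL2Norm hL,
          integral_mul_deriv_eq_neg_of_periodic hf hf' hf'c hf'' hp hp', neg_neg]
        simp only [sq]
    _ = ∫ x in (0 : ℝ)..L, -f x * f'' x := by rw [← integral_neg]; simp only [neg_mul]
    _ ≤ intervalL2Norm L (fun x => -f x) * intervalL2Norm L f'' :=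
        integral_mul_le_intervalL2Norm_mul hL hfc.neg hf''
    _ = intervalL2Norm L f * intervalL2Norm L f'' := by rw [intervalL2Norm_neg]

end Periodic

section IterateDeriv

variable {𝕜 F : Type*} [NontriviallyNormedField 𝕜] [NormedAddCommGroup F] [NormedSpace 𝕜 F]
  {n : WithTop ℕ∞} {f : 𝕜 → F}

theorem ContDiff.continuous_iterate_deriv (k : ℕ) (h : ContDiff 𝕜 n f) (hk : k ≤ n) :
    Continuous (deriv^[k] f) :=
  iteratedDeriv_eq_iterate (f := f) ▸ h.continuous_iteratedDeriv k hk

theorem ContDiff.hasDerivAt_iterate_deriv (k : ℕ) (h : ContDiff 𝕜 n f) (hk : k < n)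
    (x : 𝕜) :
    HasDerivAt (deriv^[k] f) (deriv^[k + 1] f x) x := by
  rw [iterate_succ_apply']
  exact (iteratedDeriv_eq_iterate (f := f) ▸ h.differentiable_iteratedDeriv k hk x).hasDerivAt

end IterateDeriv

section PeriodicContDiff

variable {L : ℝ} {w : ℝ → ℝ}

theorem isLogConvexUpTo_intervalL2Norm_iterate_deriv {n : ℕ} (hL : 0 ≤ L)
    (hw : ContDiff ℝ n w) (hp : Periodic w L) :
    IsLogConvexUpTo (fun k => intervalL2Norm L (deriv^[k] w)) n :=
  fun k hk => sq_intervalL2Norm_le_mul_of_periodic hL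
    (hw.hasDerivAt_iterate_deriv k (by exact_mod_cast (by omega : k < n)))
    (hw.hasDerivAt_iterate_deriv (k + 1) (by exact_mod_cast (by omega : k + 1 < n)))
    (hw.continuous_iterate_deriv (k + 2) (by exact_mod_cast hk)) (hp.iterate_deriv k)

theorem integral_mul_deriv_mul_iterate_deriv_eight (hw : ContDiff ℝ 8 w) (hp : Periodic w L) :
    ∫ x in (0 : ℝ)..L, w x * deriv w x * deriv^[8] w x =
      3 * (∫ x in (0 : ℝ)..L, deriv w x * deriv^[2] w x * deriv^[6] w x)
        + ∫ x in (0 : ℝ)..L, w x * deriv^[3] w x * deriv^[6] w x := by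
  have hD (k : ℕ) (hk : k < 8 := by norm_num) :
      ∀ x, HasDerivAt (deriv^[k] w) (deriv^[k + 1] w x) x :=
    hw.hasDerivAt_iterate_deriv k (by exact_mod_cast hk)
  have hC (k : ℕ) (hk : k ≤ 8 := by norm_num) : Continuous (deriv^[k] w) :=
    hw.continuous_iterate_deriv k (by exact_mod_cast hk)
  have hD0 := hD 0
  have hD1 := hD 1
  have hD2 := hD 2
  have hC0 : Continuous w := hC 0
  have hC1 : Continuous (deriv w) := hC 1
  have hC2 := hC 2
  have hC3 := hC 3
  have hC6 := hC 6
  have hparts₁ : ∫ x in (0 : ℝ)..L, w x * deriv w x * deriv^[8] w x =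
      -∫ x in (0 : ℝ)..L, (deriv w x * deriv w x + w x * deriv^[2] w x) * deriv^[7] w x :=
    integral_mul_deriv_eq_neg_of_periodic (fun x => (hD0 x).fun_mul (hD1 x)) (hD 7)
      (by fun_prop) (hC 8) (hp.mul (hp.iterate_deriv 1)) (hp.iterate_deriv 7)
  have hparts₂ : ∫ x in (0 : ℝ)..L,
        (deriv w x * deriv w x + w x * deriv^[2] w x) * deriv^[7] w x =
      -∫ x in (0 : ℝ)..L, (deriv^[2] w x * deriv w x + deriv w x * deriv^[2] w x
        + (deriv w x * deriv^[2] w x + w x * deriv^[3] w x)) * deriv^[6] w x :=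
    integral_mul_deriv_eq_neg_of_periodic
      (fun x => ((hD1 x).fun_mul (hD1 x)).fun_add ((hD0 x).fun_mul (hD2 x))) (hD 6)
      (by fun_prop) (hC 7)
      (((hp.iterate_deriv 1).mul (hp.iterate_deriv 1)).add (hp.mul (hp.iterate_deriv 2)))
      (hp.iterate_deriv 6)
  rw [hparts₁, hparts₂, neg_neg, ← integral_const_mul, ← integral_add
    (by apply Continuous.intervalIntegrable; fun_prop)
    (by apply Continuous.intervalIntegrable; fun_prop)]
  congr 1
  ext x
  ring

end PeriodicContDiff

theorem stmt19 :
    ∃ c : ℝ, 0 < c ∧ ∀ (L : ℝ) (w : ℝ → ℝ), 0 < L → ContDiff ℝ 8 w →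
      Function.Periodic w L → (∫ x in (0:ℝ)..L, w x = 0) →
      ∫ x in (0:ℝ)..L, w x * deriv w x * deriv^[8] w x
        ≤ c * (∫ x in (0:ℝ)..L, (w x) ^ 2) ^ ((17:ℝ)/24)
            * (∫ x in (0:ℝ)..L, (deriv^[6] w x) ^ 2) ^ ((19:ℝ)/24) := by
  refine ⟨4 * √2, by positivity, fun L w hL hw hp hmean => ?_⟩
  have hD (k : ℕ) (hk : k < 8 := by norm_num) :
      ∀ x, HasDerivAt (deriv^[k] w) (deriv^[k + 1] w x) x :=
    hw.hasDerivAt_iterate_deriv k (by exact_mod_cast hk)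
  have hC (k : ℕ) (hk : k ≤ 8 := by norm_num) : Continuous (deriv^[k] w) :=
    hw.continuous_iterate_deriv k (by exact_mod_cast hk)
  have hmean' : ∫ x in (0 : ℝ)..L, deriv w x = 0 :=
    integral_eq_zero_of_hasDerivAt_of_periodic (hD 0) (hC 1) hp
  set a : ℕ → ℝ := fun k => intervalL2Norm L (deriv^[k] w)
  have ha (k : ℕ) : 0 ≤ a k := sqrt_nonneg _
  have hinterp {i j : ℕ} (hij : i + j = 3) :=
    (isLogConvexUpTo_intervalL2Norm_iterate_deriv hL.le hw hp).sqrt_mul_mul_mul_le ha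
      (by norm_num) hij
  rw [integral_mul_deriv_mul_iterate_deriv_eight hw hp]
  calc _ ≤ 3 * (√2 * √(a 1 * a 2) * a 2 * a 6) + √2 * √(a 0 * a 1) * a 3 * a 6 :=
        add_le_add
          (mul_le_mul_of_nonneg_left (integral_mul_mul_le_of_integral_eq_zero hL (hD 1) (hC 2)
            hmean' (hC 2) (hC 6)) zero_le_three)
          (integral_mul_mul_le_of_integral_eq_zero hL (hD 0) (hC 1) hmean (hC 3) (hC 6))
    _ = √2 * (3 * (√(a 1 * a (1 + 1)) * a 2 * a 6) + √(a 0 * a (0 + 1)) * a 3 * a 6) := by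
        ring
    _ ≤ √2 * (3 * (a 0 ^ (17 / 12 : ℝ) * a 6 ^ (19 / 12 : ℝ))
          + a 0 ^ (17 / 12 : ℝ) * a 6 ^ (19 / 12 : ℝ)) := by
        gcongr ?_ * (3 * ?_ + ?_) <;> exact hinterp rfl
    _ = _ := by
        rw [show a 0 ^ (17 / 12 : ℝ) = _ from intervalL2Norm_rpow hL.le _,
          show a 6 ^ (19 / 12 : ℝ) = _ from intervalL2Norm_rpow hL.le _]
        norm_num
        ring
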